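/- arXiv:2103.09872 — 2 statements merged into one kernel-verified Lean document; each statement's English description precedes it below -/
import Mathlib

section
/- Let X̊ ∼ Binomial(r, θ_0) and X̂ ∼ Binomial(r, θ_1) with 0 < θ_0 < θ_1 < 1, and let ε̂, ε̊ satisfy √(−2θ_1 ln ξ / r) ≤ ε̂, ε̊ ≤ (θ_1 − θ_0)/2 for some ξ ∈ (0,1). Then the (1−ξ)-quantile of X̊ is at most the ξ-quantile of X̂: B^{-1}(1−ξ, r, θ_0) ≤ r(θ_0 + ε̊) ≤ r(θ_1 − ε̂) ≤ B^{-1}(ξ, r, θ_1). -/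
open Finset Real

/-- Binomial(r,θ) point mass at k. -/
noncomputable def binomP (r : ℕ) (θ : ℝ) (k : ℕ) : ℝ :=
  (r.choose k : ℝ) * θ ^ k * (1 - θ) ^ (r - k)

/-- C.d.f. P(B ≤ x) of a Binomial(r,θ). -/
noncomputable def binomCdf (r : ℕ) (θ x : ℝ) : ℝ :=
  ∑ k ∈ range (r + 1), if (k : ℝ) ≤ x then binomP r θ k else 0

/-- Strict lower tail P(B < x) of a Binomial(r,θ). -/
noncomputable def binomLowTail (r : ℕ) (θ x : ℝ) : ℝ :=
  ∑ k ∈ range (r + 1), if (k : ℝ) < x then binomP r θ k else 0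

/-- Quantile function B⁻¹(p, r, θ): generalized inverse of the binomial c.d.f. -/
noncomputable def binomQuantile (r : ℕ) (θ p : ℝ) : ℝ :=
  sInf {x : ℝ | p ≤ binomCdf r θ x}

lemma binomP_nonneg {r : ℕ} {θ : ℝ} (h0 : 0 ≤ θ) (h1 : θ ≤ 1) (k : ℕ) :
    0 ≤ binomP r θ k := by
  unfold binomP
  have : (0:ℝ) ≤ 1 - θ := by linarith
  positivity

lemma binomSum (r : ℕ) (θ : ℝ) : ∑ k ∈ range (r + 1), binomP r θ k = 1 := by
  have h := add_pow θ (1 - θ) r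
  simp only [add_sub_cancel, one_pow] at h
  rw [h]
  exact Finset.sum_congr rfl fun k _ => by unfold binomP; ring

/-- exp(-x) ≤ 1 - x + x²/2 for x ≥ 0. -/
lemma exp_neg_le_quadratic {x : ℝ} (hx : 0 ≤ x) :
    Real.exp (-x) ≤ 1 - x + x ^ 2 / 2 := by
  have h1 : 1 + x + x ^ 2 / 2 ≤ Real.exp x := Real.quadratic_le_exp_of_nonneg hx
  have h2 : (0:ℝ) < Real.exp x := Real.exp_pos x
  have h3 : Real.exp (-x) = 1 / Real.exp x := by
    rw [Real.exp_neg]; ring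
  rw [h3, div_le_iff₀ h2]
  nlinarith [sq_nonneg x, sq_nonneg (x^2)]

/-- Chernoff/Massart bound for the binomial lower tail. -/
lemma binom_chernoff (r : ℕ) (hr : 1 ≤ r) {p : ℝ} (hp : 0 < p) (hp1 : p < 1)
    (k : ℕ) (hk : (k : ℝ) ≤ r * p) :
    binomCdf r p k ≤ Real.exp (-((r:ℝ) * p - k) ^ 2 / (2 * ((r:ℝ) * p))) := by
  have hrpos : (0:ℝ) < r := by exact_mod_cast hr
  set μ : ℝ := (r:ℝ) * p with hμdef
  have hμ : 0 < μ := by positivity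
  set lam : ℝ := (μ - k) / μ with hlam
  have hlam0 : 0 ≤ lam := div_nonneg (by linarith) hμ.le
  have step1 : binomCdf r p k ≤
      ∑ j ∈ range (r + 1), binomP r p j * Real.exp (lam * ((k:ℝ) - j)) := by
    apply Finset.sum_le_sum
    intro j _
    by_cases hj : (j:ℝ) ≤ (k:ℝ)
    · rw [if_pos hj]
      have h1 : (1:ℝ) ≤ Real.exp (lam * ((k:ℝ) - j)) := by
        rw [Real.one_le_exp_iff]
        exact mul_nonneg hlam0 (by linarith)
      nlinarith [binomP_nonneg hp.le hp1.le (r := r) j]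
    · rw [if_neg hj]
      exact mul_nonneg (binomP_nonneg hp.le hp1.le j) (Real.exp_pos _).le
  have step2 : ∑ j ∈ range (r + 1), binomP r p j * Real.exp (lam * ((k:ℝ) - j)) =
      Real.exp (lam * k) * (p * Real.exp (-lam) + (1 - p)) ^ r := by
    have hpow := add_pow (p * Real.exp (-lam)) (1 - p) r
    rw [hpow, Finset.mul_sum]
    apply Finset.sum_congr rfl
    intro j _
    have hexp : Real.exp (lam * ((k:ℝ) - j)) =
        Real.exp (lam * k) * Real.exp (-lam) ^ j := by
      rw [← Real.exp_nat_mul, ← Real.exp_add]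
      ring_nf
    rw [hexp]
    unfold binomP
    rw [mul_pow]
    ring
  have hbase : 0 ≤ p * Real.exp (-lam) + (1 - p) := by
    have := (Real.exp_pos (-lam)).le
    nlinarith
  have step3 : p * Real.exp (-lam) + (1 - p) ≤ Real.exp (p * (Real.exp (-lam) - 1)) := by
    have := Real.add_one_le_exp (p * (Real.exp (-lam) - 1))
    nlinarith
  have step4 : Real.exp (-lam) - 1 ≤ -lam + lam ^ 2 / 2 := by
    have := exp_neg_le_quadratic hlam0
    linarith
  have step5 : (p * Real.exp (-lam) + (1 - p)) ^ r ≤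
      Real.exp ((r:ℝ) * (p * (-lam + lam ^ 2 / 2))) := by
    calc (p * Real.exp (-lam) + (1 - p)) ^ r
        ≤ Real.exp (p * (Real.exp (-lam) - 1)) ^ r := pow_le_pow_left₀ hbase step3 r
      _ = Real.exp ((r:ℝ) * (p * (Real.exp (-lam) - 1))) := by
          rw [← Real.exp_nat_mul]
      _ ≤ Real.exp ((r:ℝ) * (p * (-lam + lam ^ 2 / 2))) := by
          apply Real.exp_le_exp.mpr
          have hp' : 0 ≤ p := hp.le
          nlinarith
  have final : Real.exp (lam * k) * Real.exp ((r:ℝ) * (p * (-lam + lam ^ 2 / 2))) =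
      Real.exp (-(μ - k) ^ 2 / (2 * μ)) := by
    rw [← Real.exp_add]
    congr 1
    rw [hlam]
    field_simp
    ring
  calc binomCdf r p k ≤ ∑ j ∈ range (r + 1), binomP r p j * Real.exp (lam * ((k:ℝ) - j)) := step1
    _ = Real.exp (lam * k) * (p * Real.exp (-lam) + (1 - p)) ^ r := step2
    _ ≤ Real.exp (lam * k) * Real.exp ((r:ℝ) * (p * (-lam + lam ^ 2 / 2))) :=
        mul_le_mul_of_nonneg_left step5 (Real.exp_pos _).le
    _ = Real.exp (-(μ - k) ^ 2 / (2 * μ)) := final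

/-- If x < 0 the binomial cdf vanishes. -/
lemma binomCdf_neg {r : ℕ} {θ x : ℝ} (hx : x < 0) : binomCdf r θ x = 0 := by
  unfold binomCdf
  apply Finset.sum_eq_zero
  intro k _
  rw [if_neg]
  exact not_le.mpr (lt_of_lt_of_le hx (Nat.cast_nonneg k))

set_option maxHeartbeats 1000000 in
/-- Quantile separation: under Massart-type bounds and
√(−2θ₁ ln ξ / r) ≤ ε̂, ε̊ ≤ (θ₁−θ₀)/2, the (1−ξ)-quantile of Binomial(r,θ₀) is at most
r(θ₀+ε̊) ≤ r(θ₁−ε̂), which is at most the ξ-quantile of Binomial(r,θ₁). -/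
theorem binomial_quantile_separation (r : ℕ) (θ₀ θ₁ εhat εring ξ : ℝ)
    (hr : 1 ≤ r) (hθ0 : 0 < θ₀) (hθ01 : θ₀ < θ₁) (hθ1 : θ₁ < 1)
    (hξ0 : 0 < ξ) (hξ1 : ξ < 1)
    (hεhat_lb : Real.sqrt (-2 * θ₁ * Real.log ξ / r) ≤ εhat)
    (hεring_lb : Real.sqrt (-2 * θ₁ * Real.log ξ / r) ≤ εring)
    (hεhat_ub : εhat ≤ (θ₁ - θ₀) / 2) (hεring_ub : εring ≤ (θ₁ - θ₀) / 2)
    (hmassart_low : binomLowTail r θ₁ (r * θ₁ - r * εhat) ≤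
        Real.exp (-(r * εhat ^ 2) / (2 * θ₁)))
    (hmassart_up : 1 - binomCdf r θ₀ (r * θ₀ + r * εring) ≤
        Real.exp (-(r * εring ^ 2) / (2 * θ₁))) :
    binomQuantile r θ₀ (1 - ξ) ≤ r * (θ₀ + εring) ∧
      r * (θ₀ + εring) ≤ r * (θ₁ - εhat) ∧
      r * (θ₁ - εhat) ≤ binomQuantile r θ₁ ξ := by
  have hrpos : (0:ℝ) < r := by exact_mod_cast hr
  have hθ1pos : 0 < θ₁ := hθ0.trans hθ01
  have hlog : Real.log ξ < 0 := Real.log_neg hξ0 hξ1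
  have hc0 : 0 ≤ -2 * θ₁ * Real.log ξ / r := by
    apply div_nonneg _ hrpos.le
    nlinarith
  -- exp(-(r ε²)/(2θ₁)) ≤ ξ whenever sqrt(-2θ₁ ln ξ / r) ≤ ε
  have key : ∀ ε : ℝ, Real.sqrt (-2 * θ₁ * Real.log ξ / r) ≤ ε →
      Real.exp (-(r * ε ^ 2) / (2 * θ₁)) ≤ ξ := by
    intro ε hε
    have h1 : -2 * θ₁ * Real.log ξ / r ≤ ε ^ 2 := by
      have hs := Real.sq_sqrt hc0
      nlinarith [Real.sqrt_nonneg (-2 * θ₁ * Real.log ξ / r)]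
    have h1' : -2 * θ₁ * Real.log ξ ≤ (r:ℝ) * ε ^ 2 := by
      rw [div_le_iff₀ hrpos] at h1
      nlinarith
    have h2 : -((r:ℝ) * ε ^ 2) / (2 * θ₁) ≤ Real.log ξ := by
      rw [div_le_iff₀ (by positivity : (0:ℝ) < 2 * θ₁)]
      nlinarith
    calc Real.exp (-(r * ε ^ 2) / (2 * θ₁)) ≤ Real.exp (Real.log ξ) :=
          Real.exp_le_exp.mpr h2
      _ = ξ := Real.exp_log hξ0
  have hεhat0 : 0 ≤ εhat := (Real.sqrt_nonneg _).trans hεhat_lb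
  have hεring0 : 0 ≤ εring := (Real.sqrt_nonneg _).trans hεring_lb
  refine ⟨?_, ?_, ?_⟩
  · -- part 1
    have hmem : 1 - ξ ≤ binomCdf r θ₀ (r * (θ₀ + εring)) := by
      have h := key εring hεring_lb
      have : r * (θ₀ + εring) = r * θ₀ + r * εring := by ring
      rw [this]
      linarith
    have hbdd : BddBelow {x : ℝ | 1 - ξ ≤ binomCdf r θ₀ x} := by
      refine ⟨0, fun y hy => ?_⟩
      by_contra hy0
      push_neg at hy0
      rw [Set.mem_setOf_eq, binomCdf_neg hy0] at hy
      linarith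
    exact csInf_le hbdd hmem
  · -- part 2
    have : θ₀ + εring ≤ θ₁ - εhat := by linarith
    exact mul_le_mul_of_nonneg_left this hrpos.le
  · -- part 3
    have hne : ∃ x : ℝ, ξ ≤ binomCdf r θ₁ x := by
      refine ⟨(r:ℝ), ?_⟩
      have h1 : binomCdf r θ₁ (r:ℝ) = 1 := by
        unfold binomCdf
        rw [← binomSum r θ₁]
        apply Finset.sum_congr rfl
        intro k hk
        rw [if_pos]
        exact_mod_cast Nat.lt_succ_iff.mp (Finset.mem_range.mp hk)
      rw [h1]; linarith
    apply le_csInf hne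
    intro x hx
    replace hx : ξ ≤ binomCdf r θ₁ x := hx
    by_contra h
    push_neg at h
    have hx0 : 0 ≤ x := by
      by_contra hx0
      push_neg at hx0
      rw [binomCdf_neg hx0] at hx
      linarith
    set m : ℕ := min (Nat.floor x) r with hm
    have hmx : (m:ℝ) ≤ x := by
      have h1 : (m:ℝ) ≤ (Nat.floor x : ℝ) := by
        exact_mod_cast min_le_left (Nat.floor x) r
      exact h1.trans (Nat.floor_le hx0)
    have hrt : r * (θ₁ - εhat) ≤ (r:ℝ) * θ₁ := by nlinarith
    have hmμ : (m:ℝ) ≤ (r:ℝ) * θ₁ := by linarith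
    have hcdf : binomCdf r θ₁ x ≤ binomCdf r θ₁ (m:ℝ) := by
      apply Finset.sum_le_sum
      intro j hj
      by_cases hjx : (j:ℝ) ≤ x
      · rw [if_pos hjx, if_pos]
        have h1 : j ≤ Nat.floor x := Nat.le_floor hjx
        have h2 : j ≤ r := Nat.lt_succ_iff.mp (Finset.mem_range.mp hj)
        exact_mod_cast le_min h1 h2
      · rw [if_neg hjx]
        split
        · exact binomP_nonneg hθ1pos.le hθ1.le j
        · exact le_refl 0
    have hch := binom_chernoff r hr hθ1pos hθ1 m hmμ
    have hgap : (r:ℝ) * εhat < (r:ℝ) * θ₁ - m := by nlinarith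
    have hsq : ((r:ℝ) * εhat) ^ 2 < ((r:ℝ) * θ₁ - m) ^ 2 :=
      pow_lt_pow_left₀ hgap (mul_nonneg hrpos.le hεhat0) (by norm_num)
    have hexp : Real.exp (-((r:ℝ) * θ₁ - m) ^ 2 / (2 * ((r:ℝ) * θ₁))) <
        Real.exp (-((r:ℝ) * εhat) ^ 2 / (2 * ((r:ℝ) * θ₁))) := by
      apply Real.exp_lt_exp.mpr
      have hD : (0:ℝ) < 2 * ((r:ℝ) * θ₁) := by positivity
      exact div_lt_div_of_pos_right (by linarith) hD
    have heq : -((r:ℝ) * εhat) ^ 2 / (2 * ((r:ℝ) * θ₁)) = -(r * εhat ^ 2) / (2 * θ₁) := by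
      rw [div_eq_div_iff (by positivity) (by positivity : (2 * θ₁ : ℝ) ≠ 0)]
      ring
    have hfin := key εhat hεhat_lb
    rw [heq] at hexp
    linarith
end

section
/- Let X̊_{j}, j ∈ D_0 (|D_0| = m − d) and X̂_{j}, j ∈ D_1 (|D_1| = d) be independent random variables with X̊_j ∼ Binomial(r, θ_0) and X̂_j ∼ Binomial(r, θ_1), 0 < θ_0 < θ_1 < 1, ξ ∈ (0,1). If r ≥ −8θ_1 ln(ξ/m) / (θ_1 − θ_0)², then P(max_{j ∈ D_0} X̊_j ≥ min_{j ∈ D_1} X̂_j) ≤ 2ξ (up to the union bound: in fact ≤ (m−d)·(ξ/m) + d·(ξ/m) = ξ under exact union bounding). -/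
open MeasureTheory ProbabilityTheory Finset Real

/-!
Threshold every count at `r q`, with `q` the midpoint of `θ₀` and `θ₁`. Chernoff's bound puts
mass at most `exp (-r θ klFun (q / θ))` on the wrong side of `r q` for a Binomial(r, θ), and the
elementary estimate `θ klFun (q / θ) ≥ (q - θ)² / (2 max θ q) ≥ (θ₁ - θ₀)² / (8 θ₁)` makes this at
most `ξ / m` under the hypothesis on `r`. A crossing forces one of the `m` variables onto its
wrong side, so the union bound gives `ξ`.
-/

open InformationTheory

lemma sq_one_sub_div_two_le_klFun {x : ℝ} (hx0 : 0 ≤ x) (hx1 : x ≤ 1) :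
    (1 - x) ^ 2 / 2 ≤ klFun x := by
  let f : ℝ → ℝ := fun t ↦ klFun t - (1 - t) ^ 2 / 2
  have hf : AntitoneOn f (Set.Icc 0 1) := by
    refine antitoneOn_of_hasDerivWithinAt_nonpos (convex_Icc 0 1) (f' := fun t ↦ log t + (1 - t))
      (by fun_prop) (fun t ht ↦ ?_) (fun t ht ↦ ?_) <;> simp only [interior_Icc] at ht ⊢
    · exact ((hasDerivAt_klFun ht.1.ne').sub ((((hasDerivAt_id t).const_sub 1).pow 2).div_const 2)
        |>.congr_deriv (by simp; ring)).hasDerivWithinAt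
    · linarith [log_le_sub_one_of_pos ht.1]
  have := hf ⟨hx0, hx1⟩ ⟨zero_le_one, le_rfl⟩ hx1
  simp only [f, klFun_one, sub_self] at this
  linarith

lemma sq_sub_one_div_two_mul_le_klFun {x : ℝ} (hx : 1 ≤ x) :
    (x - 1) ^ 2 / (2 * x) ≤ klFun x := by
  let f : ℝ → ℝ := fun t ↦ klFun t - (t / 2 - 1 + t⁻¹ / 2)
  have hf : MonotoneOn f (Set.Ici 1) := by
    refine monotoneOn_of_hasDerivWithinAt_nonneg (convex_Ici 1)
      (f' := fun t ↦ log t - (1 / 2 - (t ^ 2)⁻¹ / 2)) ?_ (fun t ht ↦ ?_) (fun t ht ↦ ?_)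
    · have : ∀ t ∈ Set.Ici (1 : ℝ), t ≠ 0 := fun t ht ↦ (zero_lt_one.trans_le ht).ne'
      fun_prop (disch := assumption)
    all_goals simp only [interior_Ici] at ht ⊢; have ht0 : 0 < t := by linarith [ht.out]
    · exact ((hasDerivAt_klFun ht0.ne').sub ((((hasDerivAt_id t).div_const 2).sub_const 1).add
        ((hasDerivAt_inv ht0.ne').div_const 2)) |>.congr_deriv (by simp; ring)).hasDerivWithinAt
    · -- `log t ≥ 1 - t⁻¹ = (1 - t⁻²) / 2 + (1 - t⁻¹)² / 2`
      have := one_sub_inv_le_log_of_pos ht0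
      have : 0 ≤ (1 - t⁻¹) ^ 2 := sq_nonneg _
      rw [← inv_pow]
      nlinarith
  have := hf Set.self_mem_Ici hx hx
  simp only [f, klFun_one, inv_one] at this
  have e : (x - 1) ^ 2 / (2 * x) = x / 2 - 1 + x⁻¹ / 2 := by field_simp; ring
  linarith

lemma sq_sub_div_two_max_le_mul_klFun_div {p q : ℝ} (hp : 0 < p) (hq : 0 < q) :
    (q - p) ^ 2 / (2 * max p q) ≤ p * klFun (q / p) := by
  rcases le_total q p with hqp | hpq
  · have h := sq_one_sub_div_two_le_klFun (div_nonneg hq.le hp.le) ((div_le_one hp).2 hqp)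
    calc (q - p) ^ 2 / (2 * max p q) = p * ((1 - q / p) ^ 2 / 2) := by
          rw [max_eq_left hqp]; field_simp; ring
      _ ≤ p * klFun (q / p) := by gcongr
  · have h := sq_sub_one_div_two_mul_le_klFun ((one_le_div hp).2 hpq)
    calc (q - p) ^ 2 / (2 * max p q) = p * ((q / p - 1) ^ 2 / (2 * (q / p))) := by
          rw [max_eq_right hpq]; field_simp
      _ ≤ p * klFun (q / p) := by gcongr

lemma exp_neg_mul_klFun_le (r : ℕ) {p q M δ ε : ℝ} (hp : 0 < p) (hq : 0 < q) (hM : max p q ≤ M)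
    (hδ : 0 < δ) (hδpq : δ ≤ 2 * |q - p|) (hε : 0 < ε) (hr : -8 * M * log ε / δ ^ 2 ≤ r) :
    exp (-(r * (p * klFun (q / p)))) ≤ ε := by
  have hM0 : 0 < M := (lt_max_of_lt_left hp).trans_le hM
  have hrate : δ ^ 2 / (8 * M) ≤ p * klFun (q / p) := by
    refine le_trans ?_ (sq_sub_div_two_max_le_mul_klFun_div hp hq)
    have : δ ^ 2 ≤ 4 * (q - p) ^ 2 := by nlinarith [sq_abs (q - p), abs_nonneg (q - p)]
    rw [div_le_div_iff₀ (by positivity) (by positivity)]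
    nlinarith [sq_nonneg (q - p)]
  have hlog : -log ε ≤ r * (δ ^ 2 / (8 * M)) := by
    rw [div_le_iff₀ (by positivity)] at hr
    rw [mul_div_assoc', le_div_iff₀ (by positivity)]
    linarith
  calc exp (-(r * (p * klFun (q / p)))) ≤ exp (log ε) := by
        gcongr
        linarith [mul_le_mul_of_nonneg_left hrate r.cast_nonneg]
    _ = ε := exp_log hε

section Binomial

variable {r : ℕ} {p : ℝ}

lemma binomP_nonneg_s12 (hp0 : 0 ≤ p) (hp1 : p ≤ 1) (k : ℕ) : 0 ≤ binomP r p k := by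
  have : 0 ≤ 1 - p := by linarith
  unfold binomP
  positivity

lemma sum_pow_mul_binomP (r : ℕ) (p a : ℝ) :
    ∑ k ∈ range (r + 1), a ^ k * binomP r p k = (p * a + (1 - p)) ^ r := by
  rw [add_pow]
  refine sum_congr rfl fun k _ ↦ ?_
  rw [binomP, mul_pow]
  ring

lemma one_sub_binomCdf (r : ℕ) (p x : ℝ) :
    1 - binomCdf r p x = ∑ k ∈ range (r + 1), if x < k then binomP r p k else 0 := by
  have h := sum_pow_mul_binomP r p 1
  simp only [one_pow, one_mul, mul_one, add_sub_cancel] at h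
  rw [binomCdf, ← h, sub_eq_iff_eq_add, ← sum_add_distrib]
  refine sum_congr rfl fun k _ ↦ ?_
  split_ifs <;> first | (exfalso; linarith) | simp

/-- Exponential Markov inequality for the binomial law, with the moment generating function
bounded through `1 + y ≤ exp y`. -/
lemma sum_ite_binomP_le_exp (hp0 : 0 ≤ p) (hp1 : p ≤ 1) (t x : ℝ) (c : ℕ → Prop)
    [DecidablePred c] (hc : ∀ k, c k → t * x ≤ t * k) :
    ∑ k ∈ range (r + 1), (if c k then binomP r p k else 0) ≤ exp (r * p * (exp t - 1) - t * x) := by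
  have hterm : ∀ k ∈ range (r + 1),
      (if c k then binomP r p k else 0) ≤ exp (-(t * x)) * (exp t ^ k * binomP r p k) := by
    intro k _
    have hb := binomP_nonneg_s12 (r := r) hp0 hp1 k
    split_ifs with hk
    · rw [← mul_assoc, ← exp_nat_mul, ← exp_add]
      exact le_mul_of_one_le_left hb (one_le_exp (by linarith [hc k hk]))
    · positivity
  have hmgf : (p * exp t + (1 - p)) ^ r ≤ exp (r * p * (exp t - 1)) := by
    rw [mul_assoc, exp_nat_mul]
    gcongr
    exact (le_of_eq (by ring)).trans (add_one_le_exp _)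
  calc ∑ k ∈ range (r + 1), (if c k then binomP r p k else 0)
      ≤ exp (-(t * x)) * ∑ k ∈ range (r + 1), exp t ^ k * binomP r p k := by
        rw [mul_sum]; exact sum_le_sum hterm
    _ ≤ exp (-(t * x)) * exp (r * p * (exp t - 1)) := by
        rw [sum_pow_mul_binomP]; gcongr
    _ = exp (r * p * (exp t - 1) - t * x) := by rw [← exp_add]; ring_nf

/-- Chernoff's bound, with the exponential tilt `t = log (q / p)` that moves the mean to `q`. -/
lemma sum_ite_binomP_le_exp_klFun {q : ℝ} (hp0 : 0 < p) (hp1 : p ≤ 1) (hq : 0 < q) (c : ℕ → Prop)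
    [DecidablePred c] (hc : ∀ k, c k → log (q / p) * (r * q) ≤ log (q / p) * k) :
    ∑ k ∈ range (r + 1), (if c k then binomP r p k else 0) ≤ exp (-(r * (p * klFun (q / p)))) := by
  refine (sum_ite_binomP_le_exp hp0.le hp1 _ _ c hc).trans_eq ?_
  rw [exp_log (by positivity), klFun_apply]
  field_simp
  ring_nf

lemma binomCdf_mul_le_exp {q : ℝ} (hq : 0 < q) (hqp : q ≤ p) (hp1 : p ≤ 1) :
    binomCdf r p (r * q) ≤ exp (-(r * (p * klFun (q / p)))) := by
  have hp0 : 0 < p := hq.trans_le hqp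
  have hlog : log (q / p) ≤ 0 := log_nonpos (by positivity) ((div_le_one hp0).2 hqp)
  exact sum_ite_binomP_le_exp_klFun hp0 hp1 hq _
    fun k hk ↦ mul_le_mul_of_nonpos_left hk hlog

lemma one_sub_binomCdf_mul_le_exp {q : ℝ} (hp0 : 0 < p) (hpq : p ≤ q) (hp1 : p ≤ 1) :
    1 - binomCdf r p (r * q) ≤ exp (-(r * (p * klFun (q / p)))) := by
  have hlog : 0 ≤ log (q / p) := log_nonneg ((one_le_div hp0).2 hpq)
  rw [one_sub_binomCdf]
  exact sum_ite_binomP_le_exp_klFun hp0 hp1 (hp0.trans_le hpq) _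
    fun k hk ↦ mul_le_mul_of_nonneg_left hk.le hlog

end Binomial

section Measure

variable {Ω : Type*} [MeasurableSpace Ω] {μ : Measure Ω}

lemma measure_lt_le_ofReal_of_cdf [IsProbabilityMeasure μ] {X : Ω → ℝ} (hX : Measurable X)
    {x F ε : ℝ} (hF : μ {ω | X ω ≤ x} = ENNReal.ofReal F) (hFε : 1 - ε ≤ F) :
    μ {ω | x < X ω} ≤ ENNReal.ofReal ε := by
  have hcompl : {ω | x < X ω} = {ω | X ω ≤ x}ᶜ := by ext; simp
  rw [hcompl, prob_compl_eq_one_sub (measurableSet_le hX measurable_const), hF, tsub_le_iff_right]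
  calc 1 = ENNReal.ofReal 1 := ENNReal.ofReal_one.symm
    _ ≤ ENNReal.ofReal (ε + F) := ENNReal.ofReal_le_ofReal (by linarith)
    _ ≤ ENNReal.ofReal ε + ENNReal.ofReal F := ENNReal.ofReal_add_le

lemma measure_exists_ge_le {ι κ : Type*} [Fintype ι] [Fintype κ] (X : ι → Ω → ℝ)
    (Y : κ → Ω → ℝ) (x : ℝ) {ε : ENNReal} (hX : ∀ i, μ {ω | x < X i ω} ≤ ε)
    (hY : ∀ j, μ {ω | Y j ω ≤ x} ≤ ε) :
    μ {ω | ∃ i j, X i ω ≥ Y j ω} ≤ (Fintype.card ι + Fintype.card κ) * ε := by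
  have hsub : {ω | ∃ i j, X i ω ≥ Y j ω} ⊆ (⋃ i, {ω | x < X i ω}) ∪ ⋃ j, {ω | Y j ω ≤ x} := by
    rintro ω ⟨i, j, hij⟩
    rcases lt_or_ge x (X i ω) with hi | hi
    · exact Or.inl (Set.mem_iUnion.2 ⟨i, hi⟩)
    · exact Or.inr (Set.mem_iUnion.2 ⟨j, show Y j ω ≤ x by linarith⟩)
  calc μ {ω | ∃ i j, X i ω ≥ Y j ω}
      ≤ μ (⋃ i, {ω | x < X i ω}) + μ (⋃ j, {ω | Y j ω ≤ x}) :=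
        (measure_mono hsub).trans (measure_union_le _ _)
    _ ≤ ∑ i, μ {ω | x < X i ω} + ∑ j, μ {ω | Y j ω ≤ x} :=
        add_le_add (measure_iUnion_fintype_le μ _) (measure_iUnion_fintype_le μ _)
    _ ≤ ∑ _i : ι, ε + ∑ _j : κ, ε :=
        add_le_add (sum_le_sum fun i _ ↦ hX i) (sum_le_sum fun j _ ↦ hY j)
    _ = (Fintype.card ι + Fintype.card κ) * ε := by simp [add_mul]

end Measure

theorem crossing_probability_bound_general
    {Ω : Type*} [MeasurableSpace Ω] (μ : Measure Ω) [IsProbabilityMeasure μ]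
    (m d r : ℕ) (θ₀ θ₁ ξ : ℝ)
    (hdm : d < m)
    (hθ0 : 0 < θ₀) (hθ01 : θ₀ < θ₁) (hθ1 : θ₁ < 1) (hξ0 : 0 < ξ)
    (X : Fin (m - d) → Ω → ℝ) (Y : Fin d → Ω → ℝ)
    (hmX : ∀ i, Measurable (X i))
    (hdistX : ∀ i (x : ℝ), μ {ω | X i ω ≤ x} = ENNReal.ofReal (binomCdf r θ₀ x))
    (hdistY : ∀ j (x : ℝ), μ {ω | Y j ω ≤ x} = ENNReal.ofReal (binomCdf r θ₁ x))
    (hrbig : (r : ℝ) ≥ -8 * θ₁ * Real.log (ξ / m) / (θ₁ - θ₀) ^ 2) :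
    μ {ω | ∃ i j, X i ω ≥ Y j ω} ≤ ENNReal.ofReal (2 * ξ) := by
  have hm : (0 : ℝ) < m := by exact_mod_cast d.zero_le.trans_lt hdm
  set q := (θ₀ + θ₁) / 2 with hq
  have hrate : ∀ θ, 0 < θ → θ ≤ θ₁ → θ₁ - θ₀ ≤ 2 * |q - θ| →
      exp (-(r * (θ * klFun (q / θ)))) ≤ ξ / m := fun θ hθ hθθ₁ hδ ↦
    exp_neg_mul_klFun_le r hθ (by linarith) (max_le hθθ₁ (by linarith)) (by linarith) hδ
      (by positivity) hrbig
  have hX : ∀ i, μ {ω | r * q < X i ω} ≤ ENNReal.ofReal (ξ / m) := fun i ↦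
    measure_lt_le_ofReal_of_cdf (hmX i) (hdistX i _) <| by
      have := hrate θ₀ hθ0 hθ01.le (by rw [abs_of_pos (by linarith)]; linarith)
      linarith [one_sub_binomCdf_mul_le_exp (r := r) hθ0 (show θ₀ ≤ q by linarith) (by linarith)]
  have hY : ∀ j, μ {ω | Y j ω ≤ r * q} ≤ ENNReal.ofReal (ξ / m) := fun j ↦ by
    rw [hdistY]
    refine ENNReal.ofReal_le_ofReal <|
      (binomCdf_mul_le_exp (by linarith) (by linarith) hθ1.le).trans ?_
    exact hrate θ₁ (by linarith) le_rfl (by rw [abs_of_neg (by linarith)]; linarith)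
  calc μ {ω | ∃ i j, X i ω ≥ Y j ω}
      ≤ (Fintype.card (Fin (m - d)) + Fintype.card (Fin d)) * ENNReal.ofReal (ξ / m) :=
        measure_exists_ge_le X Y _ hX hY
    _ = ENNReal.ofReal ξ := by
        rw [Fintype.card_fin, Fintype.card_fin, ← Nat.cast_add, Nat.sub_add_cancel hdm.le,
          ← ENNReal.ofReal_natCast, ← ENNReal.ofReal_mul hm.le, mul_div_cancel₀ _ hm.ne']
    _ ≤ ENNReal.ofReal (2 * ξ) := ENNReal.ofReal_le_ofReal (by linarith)

/-- Lemma 2 of the paper, quantitative form: for independent X̊_j ∼ Binomial(r,θ₀)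
(j ∈ D₀, |D₀| = m−d) and X̂_j ∼ Binomial(r,θ₁) (j ∈ D₁, |D₁| = d), if
r ≥ −8θ₁ ln(ξ/m)/(θ₁−θ₀)², then P(max X̊ ≥ min X̂) ≤ ξ ≤ 2ξ. -/
theorem crossing_probability_bound
    {Ω : Type*} [MeasurableSpace Ω] (μ : Measure Ω) [IsProbabilityMeasure μ]
    (m d r : ℕ) (θ₀ θ₁ ξ : ℝ)
    (hd : 0 < d) (hdm : d < m) (hr : 1 ≤ r)
    (hθ0 : 0 < θ₀) (hθ01 : θ₀ < θ₁) (hθ1 : θ₁ < 1) (hξ0 : 0 < ξ) (hξ1 : ξ < 1)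
    (X : Fin (m - d) → Ω → ℝ) (Y : Fin d → Ω → ℝ)
    (hmX : ∀ i, Measurable (X i)) (hmY : ∀ j, Measurable (Y j))
    (hind : iIndepFun (Sum.elim X Y) μ)
    (hdistX : ∀ i (x : ℝ), μ {ω | X i ω ≤ x} = ENNReal.ofReal (binomCdf r θ₀ x))
    (hdistY : ∀ j (x : ℝ), μ {ω | Y j ω ≤ x} = ENNReal.ofReal (binomCdf r θ₁ x))
    (hrbig : (r : ℝ) ≥ -8 * θ₁ * Real.log (ξ / m) / (θ₁ - θ₀) ^ 2) :
    μ {ω | ∃ i j, X i ω ≥ Y j ω} ≤ ENNReal.ofReal (2 * ξ) :=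
  crossing_probability_bound_general μ m d r θ₀ θ₁ ξ hdm hθ0 hθ01 hθ1 hξ0 X Y hmX hdistX hdistY
    hrbig
end
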